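/- If G is a maximal planar graph (planar triangulation) on n vertices with a Hamiltonian cycle, then ψ_s(G) ≥ max{k : k·⌊k/2⌋ ≤ n}; and in general, if G is a maximal planar graph on n vertices containing a matching of size at least (n+4)/3, then ψ_s(G) ≥ max{k : k(k−1)/2 ≤ (n+4)/3}. -/

import Mathlib

open SimpleGraph

/-- A graph is planar if it has a drawing in the plane: vertices map injectively to points,
edges map to arcs between their endpoints, arc interiors avoid vertex images, and the
interiors of arcs of distinct edges are disjoint. -/
def SimpleGraph.IsPlanar {V : Type*} (G : SimpleGraph V) : Prop :=
  ∃ f : V → ℝ × ℝ, Function.Injective f ∧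
    ∃ γ : ∀ ⦃u v : V⦄, G.Adj u v → _root_.Path (f u) (f v),
      (∀ ⦃u v : V⦄ (h : G.Adj u v), Function.Injective (γ h)) ∧
      (∀ ⦃u v : V⦄ (h : G.Adj u v) (t : unitInterval), t ≠ 0 → t ≠ 1 → ∀ w, γ h t ≠ f w) ∧
      (∀ ⦃u v u' v' : V⦄ (h : G.Adj u v) (h' : G.Adj u' v'), s(u, v) ≠ s(u', v') →
        ∀ s t : unitInterval, s ≠ 0 → s ≠ 1 → γ h s ≠ γ h' t)

/-- The cone over `G`: a new vertex `none` joined to every vertex of `G`. -/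
def SimpleGraph.cone {V : Type*} (G : SimpleGraph V) : SimpleGraph (Option V) :=
  SimpleGraph.fromRel
    (fun x y => (∃ u v, x = some u ∧ y = some v ∧ G.Adj u v) ∨ x = none)

/-- A graph is outerplanar iff the cone over it is planar. -/
def SimpleGraph.IsOuterplanar {V : Type*} (G : SimpleGraph V) : Prop :=
  G.cone.IsPlanar

/-- A complete `k`-coloring: surjective, and every pair of distinct colors appears on an edge. -/
def SimpleGraph.IsCompleteColoring {V : Type*} {k : ℕ} (G : SimpleGraph V)
    (c : V → Fin k) : Prop :=
  Function.Surjective c ∧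
    ∀ i j : Fin k, i ≠ j → ∃ u v, G.Adj u v ∧ c u = i ∧ c v = j

/-- A proper coloring: adjacent vertices receive distinct colors. -/
def SimpleGraph.IsProperColoring {V : Type*} {k : ℕ} (G : SimpleGraph V)
    (c : V → Fin k) : Prop :=
  ∀ ⦃u v : V⦄, G.Adj u v → c u ≠ c v

/-- The pseudoachromatic number: the largest `k` admitting a complete `k`-coloring. -/
noncomputable def SimpleGraph.pseudoachromatic {V : Type*} (G : SimpleGraph V) : ℕ :=
  sSup {k | ∃ c : V → Fin k, G.IsCompleteColoring c}

/-- The achromatic number: the largest `k` admitting a proper complete `k`-coloring. -/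
noncomputable def SimpleGraph.achromatic {V : Type*} (G : SimpleGraph V) : ℕ :=
  sSup {k | ∃ c : V → Fin k, G.IsProperColoring c ∧ G.IsCompleteColoring c}

/-- The chromatic number: the least `k` admitting a proper `k`-coloring. -/
noncomputable def SimpleGraph.chromNum {V : Type*} (G : SimpleGraph V) : ℕ :=
  sInf {k | ∃ c : V → Fin k, G.IsProperColoring c}

/-- The thickness: the least number of planar subgraphs whose union is `G`. -/
noncomputable def SimpleGraph.thickness {V : Type*} (G : SimpleGraph V) : ℕ :=
  sInf {k | ∃ f : Fin k → SimpleGraph V, (∀ i, (f i).IsPlanar) ∧ (⨆ i, f i) = G}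

/-- The outerthickness: the least number of outerplanar subgraphs whose union is `G`. -/
noncomputable def SimpleGraph.outerthickness {V : Type*} (G : SimpleGraph V) : ℕ :=
  sInf {k | ∃ f : Fin k → SimpleGraph V, (∀ i, (f i).IsOuterplanar) ∧ (⨆ i, f i) = G}

/-- The 4-girth-thickness: the least number of planar subgraphs of girth at least 4
whose union is `G`. -/
noncomputable def SimpleGraph.girth4Thickness {V : Type*} (G : SimpleGraph V) : ℕ :=
  sInf {k | ∃ f : Fin k → SimpleGraph V,
    (∀ i, (f i).IsPlanar ∧ 4 ≤ (f i).egirth) ∧ (⨆ i, f i) = G}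

/-!
A colouring is complete as soon as every pair of distinct colours occurs on an edge. Along a
cycle it therefore suffices to write a cyclic word of length `k⌊k/2⌋` on `k` letters in which
every two letters are adjacent somewhere: for `k = 2m` concatenate Walecki's `m` zigzag
Hamiltonian paths of `K_{2m}`, and for `k = 2m + 1` put an extra letter in front of each of
them, which closes them into the `m` Hamiltonian cycles of `K_{2m+1}`. A longer cycle is padded
by repeating the first letter. Given a matching with at least `k(k-1)/2` edges, give the two
ends of a separate matching edge to each pair of colours.
-/

/-- Walecki's zigzag `i, i + 1, i - 1, i + 2, i - 2, …, i + m` in `ℤ/2m`. Its consecutive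
differences are `±1, ±2, …, ±(2m - 1)`, so its translates by `i < m` partition the edges of
`K_{2m}`. -/
def zigzag (m i r : ℕ) : ℕ :=
  if r % 2 = 1 then i + (r + 1) / 2 else if r / 2 ≤ i then i - r / 2 else i + 2 * m - r / 2

theorem zigzag_lt {m i r : ℕ} (hi : i < m) (hr : r < 2 * m) : zigzag m i r < 2 * m := by
  unfold zigzag; split_ifs <;> omega

theorem exists_zigzag_adjacent {m x y : ℕ} (hx : x < 2 * m) (hy : y < 2 * m) (hxy : x ≠ y) :
    ∃ i < m, ∃ r, r + 1 < 2 * m ∧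
      (zigzag m i r = x ∧ zigzag m i (r + 1) = y ∨ zigzag m i r = y ∧ zigzag m i (r + 1) = x) := by
  wlog hlt : x < y generalizing x y
  · obtain ⟨i, hi, r, hr, h⟩ := this hy hx hxy.symm (by omega)
    exact ⟨i, hi, r, hr, h.symm⟩
  -- the pairs on the `i`-th path are exactly those with `x + y ≡ 2i` or `2i + 1 (mod 2m)`
  by_cases hq : (x + y) / 2 < m
  · refine ⟨(x + y) / 2, hq, y - x - 1, by omega, ?_⟩
    unfold zigzag; split_ifs <;> omega
  · refine ⟨(x + y) / 2 - m, by omega, 2 * m - (y - x) - 1, by omega, ?_⟩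
    unfold zigzag; split_ifs <;> omega

/-- Block `i < k / 2` of length `k` is the `i`-th zigzag, preceded by the letter `k - 1` when `k`
is odd; after the last block the word is constantly its first letter. -/
def pairWord (k t : ℕ) : ℕ :=
  if t / k < k / 2 ∧ k % 2 ≤ t % k then zigzag (k / 2) (t / k) (t % k - k % 2)
  else if k % 2 = 1 then k - 1 else 0

theorem pairWord_lt {k : ℕ} (hk : 0 < k) (t : ℕ) : pairWord k t < k := by
  have := Nat.mod_lt t hk
  unfold pairWord
  split_ifs with h
  · have := zigzag_lt (m := k / 2) h.1 (r := t % k - k % 2) (by omega)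
    omega
  all_goals omega

theorem pairWord_mul_add {k i r : ℕ} (hr : r < k) :
    pairWord k (i * k + r) =
      if i < k / 2 ∧ k % 2 ≤ r then zigzag (k / 2) i (r - k % 2)
      else if k % 2 = 1 then k - 1 else 0 := by
  have hk : 0 < k := by omega
  have hdiv : (i * k + r) / k = i := by
    rw [mul_comm, Nat.mul_add_div hk, Nat.div_eq_of_lt hr, add_zero]
  have hmod : (i * k + r) % k = r := by rw [Nat.mul_add_mod', Nat.mod_eq_of_lt hr]
  rw [pairWord, hdiv, hmod]

theorem pairWord_of_le {k t : ℕ} (ht : k * (k / 2) ≤ t) : pairWord k t = pairWord k 0 := by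
  rcases Nat.eq_zero_or_pos k with rfl | hk
  · simp [pairWord]
  have : k / 2 ≤ t / k := (Nat.le_div_iff_mul_le hk).2 (by rwa [mul_comm])
  simp only [pairWord, Nat.zero_div, Nat.zero_mod, zigzag]
  split_ifs <;> omega

theorem exists_pairWord_adjacent {k a b : ℕ} (hk : 2 ≤ k) (ha : a < k) (hb : b < k) (hab : a ≠ b) :
    ∃ t < k * (k / 2), pairWord k t = a ∧ pairWord k (t + 1) = b ∨
      pairWord k t = b ∧ pairWord k (t + 1) = a := by
  wlog hlt : a < b generalizing a b
  · obtain ⟨t, ht, h⟩ := this hb ha hab.symm (by omega)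
    exact ⟨t, ht, h.symm⟩
  have hblock {i : ℕ} (hi : i < k / 2) (r : ℕ) (hr : r < k) : i * k + r < k * (k / 2) := by
    nlinarith
  by_cases hb2 : b < 2 * (k / 2)
  · obtain ⟨i, hi, r, hr, h⟩ := exists_zigzag_adjacent (m := k / 2) (by omega) hb2 hab
    refine ⟨i * k + (r + k % 2), hblock hi _ (by omega), ?_⟩
    rw [add_assoc, pairWord_mul_add (by omega), pairWord_mul_add (by omega),
      if_pos ⟨hi, by omega⟩, if_pos ⟨hi, by omega⟩, Nat.add_sub_cancel,
      show r + k % 2 + 1 - k % 2 = r + 1 by omega]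
    exact h
  -- here `k = 2m + 1` and `b = 2m` is the extra letter, which starts block `a` if `a < m` and
  -- follows the last letter `a` of block `a - m` otherwise
  by_cases ham : a < k / 2
  · refine ⟨a * k + 0, hblock ham 0 (by omega), Or.inr ?_⟩
    rw [add_assoc, pairWord_mul_add (by omega), pairWord_mul_add (by omega)]
    simp only [zigzag]
    split_ifs <;> omega
  · refine ⟨(a - k / 2) * k + (k - 1), hblock (by omega) _ (by omega), Or.inl ?_⟩
    rw [add_assoc, show (a - k / 2) * k + (k - 1 + 1) = (a - k / 2 + 1) * k + 0 by
      rw [Nat.succ_mul]; omega, pairWord_mul_add (by omega), pairWord_mul_add (by omega)]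
    simp only [zigzag]
    split_ifs <;> omega

namespace SimpleGraph

variable {V : Type*} {G : SimpleGraph V} {k : ℕ}

theorem IsCompleteColoring.le_pseudoachromatic [Finite V] {c : V → Fin k}
    (hc : G.IsCompleteColoring c) : k ≤ G.pseudoachromatic := by
  refine le_csSup ⟨Nat.card V, ?_⟩ ⟨c, hc⟩
  rintro k' ⟨c', hc', -⟩
  simpa using Nat.card_le_card_of_surjective c' hc'

theorem le_pseudoachromatic_of_forall_exists_adj [Finite V] [Nonempty V]
    (h : 2 ≤ k → ∃ c : V → Fin k, ∀ i j, i ≠ j → ∃ u v, G.Adj u v ∧ c u = i ∧ c v = j) :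
    k ≤ G.pseudoachromatic := by
  rcases lt_or_ge k 2 with hk | hk
  · interval_cases k
    · exact Nat.zero_le _
    · exact IsCompleteColoring.le_pseudoachromatic (c := fun _ => 0)
        ⟨fun _ => ⟨Classical.arbitrary V, Subsingleton.elim _ _⟩,
          fun i j hij => absurd (Subsingleton.elim i j) hij⟩
  · obtain ⟨c, hc⟩ := h hk
    have : Nontrivial (Fin k) := Fin.nontrivial_iff_two_le.2 hk
    refine IsCompleteColoring.le_pseudoachromatic ⟨fun i => ?_, hc⟩
    obtain ⟨j, hj⟩ := exists_ne i
    obtain ⟨u, -, -, hu, -⟩ := hc i j hj.symm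
    exact ⟨u, hu⟩

theorem Walk.IsCycle.exists_comp_getVert_eq {α : Type*} {u : V} {p : G.Walk u u}
    (hp : p.IsCycle) (w : ℕ → α) (hw : w p.length = w 0) :
    ∃ c : V → α, ∀ t ≤ p.length, c (p.getVert t) = w t := by
  have hinj : Function.Injective fun t : Fin p.length => p.getVert t := fun s t h =>
    Fin.ext (hp.getVert_injOn' (by simp; omega) (by simp; omega) h)
  have hc (t : Fin p.length) := hinj.extend_apply (fun t => w t) (fun _ => w 0) t
  refine ⟨Function.extend (fun t : Fin p.length => p.getVert t) (fun t => w t) (fun _ => w 0),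
    fun t ht => ?_⟩
  rcases ht.lt_or_eq with ht | rfl
  · exact hc ⟨t, ht⟩
  · simpa [hw] using hc ⟨0, by have := hp.three_le_length; omega⟩

theorem Subgraph.adj_out_of_mem_edgeSet {M : G.Subgraph} {e : Sym2 V} (he : e ∈ M.edgeSet) :
    M.Adj e.out.1 e.out.2 := by
  rwa [← Subgraph.mem_edgeSet, Sym2.mk, e.out_eq]

theorem Subgraph.IsMatching.eq_of_mem_edgeSet {M : G.Subgraph} (hM : M.IsMatching) {x : V}
    {e e' : Sym2 V} (he : e ∈ M.edgeSet) (he' : e' ∈ M.edgeSet) (hx : x ∈ e) (hx' : x ∈ e') :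
    e = e' := by
  obtain ⟨y, rfl⟩ := Sym2.mem_iff_exists.1 hx
  obtain ⟨y', rfl⟩ := Sym2.mem_iff_exists.1 hx'
  rw [hM.eq_of_adj_left (Subgraph.mem_edgeSet.1 he) (Subgraph.mem_edgeSet.1 he')]

theorem Subgraph.IsMatching.injective_sumElim_out {M : G.Subgraph} (hM : M.IsMatching) :
    Function.Injective
      (Sum.elim (fun e : M.edgeSet => e.1.out.1) (fun e : M.edgeSet => e.1.out.2)) := by
  have heq {e e' : M.edgeSet} {x : V} (hx : x ∈ e.1) (hx' : x ∈ e'.1) : e = e' :=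
    Subtype.ext (hM.eq_of_mem_edgeSet e.2 e'.2 hx hx')
  have hne (e : M.edgeSet) : e.1.out.1 ≠ e.1.out.2 := (adj_out_of_mem_edgeSet e.2).ne
  rintro (e | e) (e' | e') h <;> simp only [Sum.elim_inl, Sum.elim_inr] at h
  · exact congrArg _ (heq (Sym2.out_fst_mem _) (h ▸ Sym2.out_fst_mem _))
  · obtain rfl := heq (Sym2.out_fst_mem _) (h ▸ Sym2.out_snd_mem _)
    exact absurd h (hne e)
  · obtain rfl := heq (Sym2.out_snd_mem _) (h ▸ Sym2.out_fst_mem _)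
    exact absurd h.symm (hne e)
  · exact congrArg _ (heq (Sym2.out_snd_mem _) (h ▸ Sym2.out_snd_mem _))

theorem Walk.IsCycle.le_pseudoachromatic [Finite V] {u : V} {p : G.Walk u u} (hp : p.IsCycle)
    (hk : k * (k / 2) ≤ p.length) : k ≤ G.pseudoachromatic := by
  have : Nonempty V := ⟨u⟩
  refine le_pseudoachromatic_of_forall_exists_adj fun hk2 => ?_
  let w : ℕ → Fin k := fun t => ⟨pairWord k t, pairWord_lt (by omega) t⟩
  obtain ⟨c, hc⟩ := hp.exists_comp_getVert_eq w (Fin.ext (pairWord_of_le hk))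
  refine ⟨c, fun i j hij => ?_⟩
  obtain ⟨t, ht, h⟩ := exists_pairWord_adjacent hk2 i.2 j.2 (Fin.val_ne_of_ne hij)
  have hadj : G.Adj (p.getVert t) (p.getVert (t + 1)) := p.adj_getVert_succ (by omega)
  have hc₀ := hc t (by omega)
  have hc₁ := hc (t + 1) (by omega)
  rcases h with ⟨h₀, h₁⟩ | ⟨h₀, h₁⟩
  · exact ⟨_, _, hadj, hc₀.trans (Fin.ext h₀), hc₁.trans (Fin.ext h₁)⟩
  · exact ⟨_, _, hadj.symm, hc₁.trans (Fin.ext h₁), hc₀.trans (Fin.ext h₀)⟩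

theorem Subgraph.IsMatching.le_pseudoachromatic [Finite V] [Nonempty V] {M : G.Subgraph}
    (hM : M.IsMatching) (hk : k.choose 2 ≤ M.edgeSet.ncard) : k ≤ G.pseudoachromatic := by
  refine le_pseudoachromatic_of_forall_exists_adj fun hk2 => ?_
  obtain ⟨F⟩ : Nonempty ({q : Sym2 (Fin k) // ¬q.IsDiag} ↪ M.edgeSet) := by
    classical
    have := Fintype.ofFinite M.edgeSet
    refine Function.Embedding.nonempty_of_card_le ?_
    rwa [Sym2.card_subtype_not_diag, Fintype.card_fin, ← Nat.card_eq_fintype_card,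
      Nat.card_coe_set_eq]
  let ends := Sum.elim (fun e : M.edgeSet => e.1.out.1) (fun e => e.1.out.2) ∘ Sum.map F F
  have hends : Function.Injective ends :=
    hM.injective_sumElim_out.comp (Sum.map_injective.2 ⟨F.injective, F.injective⟩)
  let colors : {q : Sym2 (Fin k) // ¬q.IsDiag} ⊕ {q : Sym2 (Fin k) // ¬q.IsDiag} → Fin k :=
    Sum.elim (fun q => q.1.out.1) (fun q => q.1.out.2)
  refine ⟨Function.extend ends colors fun _ => ⟨0, by omega⟩, fun i j hij => ?_⟩
  let q : {q : Sym2 (Fin k) // ¬q.IsDiag} := ⟨s(i, j), by simpa⟩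
  have hadj : G.Adj (ends (.inl q)) (ends (.inr q)) := M.adj_sub (adj_out_of_mem_edgeSet (F q).2)
  have h₀ := hends.extend_apply colors (fun _ => ⟨0, by omega⟩) (.inl q)
  have h₁ := hends.extend_apply colors (fun _ => ⟨0, by omega⟩) (.inr q)
  rcases Sym2.eq_iff.1 (q.1.out_eq.trans rfl : s(q.1.out.1, q.1.out.2) = s(i, j)) with
    ⟨hi, hj⟩ | ⟨hj, hi⟩
  · exact ⟨_, _, hadj, h₀.trans hi, h₁.trans hj⟩
  · exact ⟨_, _, hadj.symm, h₁.trans hi, h₀.trans hj⟩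

end SimpleGraph

theorem pseudoachromatic_maximal_planar_lower_general {V : Type*} [Fintype V] [DecidableEq V]
    (G : SimpleGraph V) (n : ℕ) (hn : Fintype.card V = n) :
    ((∃ (v : V) (p : G.Walk v v), p.IsHamiltonianCycle) →
        sSup {k : ℕ | k * (k / 2) ≤ n} ≤ G.pseudoachromatic) ∧
      ((∃ M : G.Subgraph, M.IsMatching ∧ ((n : ℚ) + 4) / 3 ≤ M.edgeSet.ncard) →
        sSup {k : ℕ | ((k : ℚ) * (k - 1)) / 2 ≤ ((n : ℚ) + 4) / 3} ≤ G.pseudoachromatic) := by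
  constructor
  · rintro ⟨v, p, hp⟩
    refine csSup_le ⟨0, by simp⟩ fun k hk => hp.isCycle.le_pseudoachromatic ?_
    rwa [hp.length_eq, hn]
  · rintro ⟨M, hM, hMcard⟩
    have hM₀ : 0 < M.edgeSet.ncard := by
      exact_mod_cast (by positivity : (0 : ℚ) < ((n : ℚ) + 4) / 3).trans_le hMcard
    obtain ⟨e, -⟩ := Set.nonempty_of_ncard_ne_zero hM₀.ne'
    have : Nonempty V := ⟨e.out.1⟩
    refine csSup_le ⟨0, by simp; positivity⟩ fun k hk => hM.le_pseudoachromatic ?_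
    rw [← Nat.cast_le (α := ℚ), Nat.cast_choose_two]
    exact hk.trans hMcard

/-- If `G` is a maximal planar graph (a planar graph on `n` vertices with exactly `3n − 6`
edges) with a Hamiltonian cycle then `ψ_s(G) ≥ max {k : k⌊k/2⌋ ≤ n}`; and if it contains a
matching of size at least `(n+4)/3` then `ψ_s(G) ≥ max {k : k(k−1)/2 ≤ (n+4)/3}`. -/
theorem pseudoachromatic_maximal_planar_lower {V : Type*} [Fintype V] [DecidableEq V]
    (G : SimpleGraph V) [DecidableRel G.Adj] (n : ℕ) (hn : Fintype.card V = n)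
    (hplanar : G.IsPlanar) (hmax : G.edgeFinset.card = 3 * n - 6) :
    ((∃ (v : V) (p : G.Walk v v), p.IsHamiltonianCycle) →
        sSup {k : ℕ | k * (k / 2) ≤ n} ≤ G.pseudoachromatic) ∧
      ((∃ M : G.Subgraph, M.IsMatching ∧ ((n : ℚ) + 4) / 3 ≤ M.edgeSet.ncard) →
        sSup {k : ℕ | ((k : ℚ) * (k - 1)) / 2 ≤ ((n : ℚ) + 4) / 3} ≤ G.pseudoachromatic) :=
  pseudoachromatic_maximal_planar_lower_general G n hn
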